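/- For n ≥ 1 and 1 ≤ p < ∞, the operator M_z on S_{n,0}^p is similar to T = M_z + n T_z on H^p via the n-th derivative: M_z = (d^n/dz^n)^{-1} ∘ T ∘ (d^n/dz^n), where d^n/dz^n : S_{n,0}^p → H^p is an isometric isomorphism. -/

import Mathlib

open MeasureTheory Metric Set Filter

/-- The Hardy space `p`-norm on the unit disk (as an extended real). -/
noncomputable def hardyNorm (p : ℝ) (f : ℂ → ℂ) : ENNReal :=
  ⨆ r : Set.Ioo (0:ℝ) 1,
    ((∫⁻ θ in Set.Ioc (0:ℝ) (2*Real.pi),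
        ENNReal.ofReal (‖f ((r:ℝ) * Complex.exp (θ * Complex.I))‖ ^ p)) /
      ENNReal.ofReal (2*Real.pi)) ^ (1/p)

/-- Sup norm over the unit disk. -/
noncomputable def supNorm (f : ℂ → ℂ) : ENNReal :=
  ⨆ z ∈ Metric.ball (0:ℂ) 1, ENNReal.ofReal ‖f z‖

/-- The recursively defined norm of `S_n^p`: `‖f‖_{S_n^p} = |f 0| + ‖f'‖_{S_{n-1}^p}`. -/
noncomputable def snNorm : ℕ → ℝ → (ℂ → ℂ) → ENNReal
  | 0, p, f => hardyNorm p f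
  | n+1, p, f => ENNReal.ofReal ‖f 0‖ + snNorm n p (deriv f)

/-- Membership in the Hardy space `H^p` of the unit disk. -/
def MemHp (p : ℝ) (f : ℂ → ℂ) : Prop :=
  DifferentiableOn ℂ f (Metric.ball 0 1) ∧ hardyNorm p f < ⊤

/-- Membership in `S_n^p`: analytic on the disk with `n`-th derivative in `H^p`. -/
def MemS (n : ℕ) (p : ℝ) (f : ℂ → ℂ) : Prop :=
  DifferentiableOn ℂ f (Metric.ball 0 1) ∧ hardyNorm p (iteratedDeriv n f) < ⊤

/-- Membership in `S_{n,0}^p`: members of `S_n^p` whose first `n` Taylor coefficients vanish. -/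
def MemS0 (n : ℕ) (p : ℝ) (f : ℂ → ℂ) : Prop :=
  MemS n p f ∧ ∀ m < n, iteratedDeriv m f 0 = 0

/-- `(V_n f)(z) = (1/(n-1)!) ∫_0^z (z-ζ)^{n-1} f(ζ) dζ`, along the segment `ζ = t z`. -/
noncomputable def Vop (n : ℕ) (f : ℂ → ℂ) (z : ℂ) : ℂ :=
  (1 / (Nat.factorial (n-1) : ℂ)) *
    ∫ t in (0:ℝ)..1, z * (z - (t:ℂ) * z) ^ (n-1) * f ((t:ℂ) * z)

/-- The Volterra operator `(T_z f)(z) = ∫_0^z f(ω) dω` along the segment. -/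
noncomputable def Volterra (f : ℂ → ℂ) (z : ℂ) : ℂ :=
  ∫ t in (0:ℝ)..1, z * f ((t:ℂ) * z)

/-!
Write `g = f⁽ⁿ⁾`. Leibniz' rule gives `(z f)⁽ⁿ⁾ = z g + n f⁽ⁿ⁻¹⁾`, and `f⁽ⁿ⁻¹⁾ = T_z g` by the
fundamental theorem of calculus along `[0, z]`, since `f⁽ⁿ⁻¹⁾(0) = 0`. Hence `(z f)⁽ⁿ⁾ = T g`.
As `z f` again vanishes to order `n` at `0`, Taylor's formula with integral remainder along
`[0, z]` gives `z f = V_n ((z f)⁽ⁿ⁾) = V_n (T g)`.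

That `z f` stays in `S_{n,0}^p` amounts to `‖T g‖_{H^p} ≤ (n + 1) ‖g‖_{H^p}`, and the only
non-trivial part is `‖T_z g‖_{H^p} ≤ ‖g‖_{H^p}`: from `|T_z g(w)| ≤ ∫₀¹ |g(t w)| dt`, Jensen's
inequality and Tonelli bound the `p`-th integral mean of `T_z g` on the circle of radius `r` by
an average over `t ∈ (0, 1]` of the `p`-th integral means of `g` on the circles of radius `t r`.
-/

section Segment

lemma StarConvex.ofReal_mul_mem {U : Set ℂ} (hU : StarConvex ℝ 0 U) {z : ℂ} (hz : z ∈ U)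
    {t : ℝ} (ht : t ∈ Icc (0:ℝ) 1) : (t:ℂ) * z ∈ U := by
  simpa [Complex.real_smul] using hU.smul_mem hz ht.1 ht.2

lemma starConvex_ball_zero (R : ℝ) (hR : 0 < R) : StarConvex ℝ 0 (ball (0:ℂ) R) :=
  (convex_ball 0 R).starConvex (mem_ball_self hR)

lemma ContinuousOn.comp_ofReal_mul {U : Set ℂ} {g : ℂ → ℂ} (hg : ContinuousOn g U)
    (hU : StarConvex ℝ 0 U) {z : ℂ} (hz : z ∈ U) :
    ContinuousOn (fun t : ℝ => g (t * z)) (Icc 0 1) :=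
  hg.comp (by fun_prop) fun _ ht => hU.ofReal_mul_mem hz ht

lemma HasDerivAt.comp_ofReal_mul {F : ℂ → ℂ} {F' z : ℂ} {t : ℝ}
    (h : HasDerivAt F F' (t * z)) : HasDerivAt (fun s : ℝ => F (s * z)) (F' * z) t := by
  simpa using (h.comp (t:ℂ) ((hasDerivAt_id _).mul_const z)).comp_ofReal

end Segment

section Holomorphic

variable {U : Set ℂ} {f : ℂ → ℂ}

lemma DifferentiableOn.hasDerivAt_iteratedDeriv (hf : DifferentiableOn ℂ f U) (hU : IsOpen U)
    (k : ℕ) {w : ℂ} (hw : w ∈ U) :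
    HasDerivAt (iteratedDeriv k f) (iteratedDeriv (k + 1) f w) w := by
  have h := ((hf.analyticOnNhd hU).iterated_deriv k w hw).differentiableAt.hasDerivAt
  rwa [← iteratedDeriv_eq_iterate, ← iteratedDeriv_succ] at h

lemma DifferentiableOn.continuousOn_iteratedDeriv (hf : DifferentiableOn ℂ f U) (hU : IsOpen U)
    (k : ℕ) : ContinuousOn (iteratedDeriv k f) U := fun _ hw =>
  (hf.hasDerivAt_iteratedDeriv hU k hw).continuousAt.continuousWithinAt

lemma iteratedDeriv_succ_id_mul (hf : DifferentiableOn ℂ f U) (hU : IsOpen U) (m : ℕ) {w : ℂ}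
    (hw : w ∈ U) :
    iteratedDeriv (m + 1) (fun w => w * f w) w =
      w * iteratedDeriv (m + 1) f w + ((m + 1 : ℕ) : ℂ) * iteratedDeriv m f w := by
  induction m generalizing w with
  | zero =>
    have h : HasDerivAt (fun w => w * f w) (1 * f w + w * iteratedDeriv 1 f w) w := by
      simpa using (hasDerivAt_id' w).fun_mul (hf.hasDerivAt_iteratedDeriv hU 0 hw)
    rw [iteratedDeriv_one, h.deriv, iteratedDeriv_zero]
    push_cast
    ring
  | succ m ih =>
    have h : HasDerivAt
        (fun w => w * iteratedDeriv (m + 1) f w + ((m + 1 : ℕ) : ℂ) * iteratedDeriv m f w)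
        ((1 * iteratedDeriv (m + 1) f w + w * iteratedDeriv (m + 2) f w) +
          ((m + 1 : ℕ) : ℂ) * iteratedDeriv (m + 1) f w) w :=
      ((hasDerivAt_id' w).fun_mul (hf.hasDerivAt_iteratedDeriv hU (m + 1) hw)).add
        ((hf.hasDerivAt_iteratedDeriv hU m hw).const_mul _)
    have heq : iteratedDeriv (m + 1) (fun w => w * f w) =ᶠ[nhds w]
        fun w => w * iteratedDeriv (m + 1) f w + ((m + 1 : ℕ) : ℂ) * iteratedDeriv m f w :=
      Filter.eventually_of_mem (hU.mem_nhds hw) fun _ hx => ih hx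
    rw [iteratedDeriv_succ, heq.deriv_eq, h.deriv]
    push_cast
    ring

end Holomorphic

section Volterra

variable {U : Set ℂ}

lemma Volterra_eq_sub (hU : StarConvex ℝ 0 U) {F G : ℂ → ℂ}
    (hF : ∀ w ∈ U, HasDerivAt F (G w) w) (hG : ContinuousOn G U) {z : ℂ} (hz : z ∈ U) :
    Volterra G z = F z - F 0 := by
  have := intervalIntegral.integral_eq_sub_of_hasDerivAt (a := 0) (b := 1)
    (f := fun t : ℝ => F (t * z)) (f' := fun t : ℝ => z * G (t * z))
    (fun t ht => by
      rw [uIcc_of_le zero_le_one] at ht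
      rw [mul_comm z]
      exact (hF _ (hU.ofReal_mul_mem hz ht)).comp_ofReal_mul)
    ((continuousOn_const.mul (hG.comp_ofReal_mul hU hz)).intervalIntegrable_of_Icc zero_le_one)
  simpa [Volterra] using this

lemma eqOn_Volterra_iteratedDeriv_succ (hUo : IsOpen U) (hU : StarConvex ℝ 0 U) {f : ℂ → ℂ}
    (hf : DifferentiableOn ℂ f U) {k : ℕ} (hk : iteratedDeriv k f 0 = 0) :
    EqOn (iteratedDeriv k f) (Volterra (iteratedDeriv (k + 1) f)) U := fun z hz => by
  rw [Volterra_eq_sub hU (fun w hw => hf.hasDerivAt_iteratedDeriv hUo k hw)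
    (hf.continuousOn_iteratedDeriv hUo (k + 1)) hz, hk, sub_zero]

lemma Vop_congr (hU : StarConvex ℝ 0 U) {n : ℕ} {a b : ℂ → ℂ} (h : EqOn a b U) {z : ℂ}
    (hz : z ∈ U) : Vop n a z = Vop n b z := by
  unfold Vop
  congr 1
  refine intervalIntegral.integral_congr fun t ht => ?_
  rw [uIcc_of_le zero_le_one] at ht
  simp only [h (hU.ofReal_mul_mem hz ht)]

end Volterra

open Nat in
theorem taylor_integral_of_hasDerivAt {E : Type*} [NormedAddCommGroup E] [NormedSpace ℝ E]
    [CompleteSpace E] (u : ℕ → ℝ → E) (n : ℕ)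
    (hu : ∀ k ≤ n, ∀ t ∈ Icc (0:ℝ) 1, HasDerivAt (u k) (u (k + 1) t) t)
    (hc : ContinuousOn (u (n + 1)) (Icc 0 1)) :
    u 0 1 = ∑ k ∈ Finset.range (n + 1), (k ! : ℝ)⁻¹ • u k 0 +
      (n ! : ℝ)⁻¹ • ∫ t in (0:ℝ)..1, (1 - t) ^ n • u (n + 1) t := by
  have hu' : ∀ k ≤ n, ∀ t ∈ uIcc (0:ℝ) 1, HasDerivAt (u k) (u (k + 1) t) t := by
    simpa only [uIcc_of_le zero_le_one] using hu
  induction n with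
  | zero =>
    have := intervalIntegral.integral_eq_sub_of_hasDerivAt (hu' 0 le_rfl)
      (hc.intervalIntegrable_of_Icc zero_le_one)
    simp [this]
  | succ n ih =>
    have hcn : ContinuousOn (u (n + 1)) (Icc 0 1) := fun t ht =>
      (hu (n + 1) le_rfl t ht).continuousAt.continuousWithinAt
    have hpow : ∀ t ∈ uIcc (0:ℝ) 1, HasDerivAt (fun t : ℝ => (1 - t) ^ (n + 1))
        (-((n + 1 : ℕ) * (1 - t) ^ n)) t := fun t _ => by
      simpa using ((hasDerivAt_id t).const_sub 1).fun_pow (n + 1)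
    have parts := intervalIntegral.integral_smul_deriv_eq_deriv_smul hpow (hu' (n + 1) le_rfl)
      ((by fun_prop : Continuous _).intervalIntegrable 0 1)
      (hc.intervalIntegrable_of_Icc zero_le_one)
    simp only [neg_smul, intervalIntegral.integral_neg, mul_smul,
      intervalIntegral.integral_smul] at parts
    have hfac : ((n + 1)! : ℝ)⁻¹ * (n + 1 : ℕ) = (n ! : ℝ)⁻¹ := by
      rw [Nat.factorial_succ, Nat.cast_mul]
      field_simp
    rw [ih (fun k hk => hu k (by omega)) hcn (fun k hk => hu' k (by omega)), parts,
      Finset.sum_range_succ _ (n + 1)]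
    simp only [sub_self, zero_pow (succ_ne_zero n), sub_zero, one_pow, one_smul, zero_smul]
    linear_combination (norm := module) hfac.symm • ∫ t in (0:ℝ)..1, (1 - t) ^ n • u (n + 1) t

lemma eq_Vop_iteratedDeriv {U : Set ℂ} (hUo : IsOpen U) (hU : StarConvex ℝ 0 U) {F : ℂ → ℂ}
    (hF : DifferentiableOn ℂ F U) (k : ℕ) (h0 : ∀ m < k + 1, iteratedDeriv m F 0 = 0) {z : ℂ}
    (hz : z ∈ U) : F z = Vop (k + 1) (iteratedDeriv (k + 1) F) z := by
  set u : ℕ → ℝ → ℂ := fun m t => z ^ m * iteratedDeriv m F (t * z)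
  have hu (m : ℕ) : ∀ t ∈ Icc (0:ℝ) 1, HasDerivAt (u m) (u (m + 1) t) t := fun t ht => by
    refine (((hF.hasDerivAt_iteratedDeriv hUo m
      (hU.ofReal_mul_mem hz ht)).comp_ofReal_mul).const_mul (z ^ m)).congr_deriv ?_
    ring
  have hc : ContinuousOn (u (k + 1)) (Icc 0 1) :=
    continuousOn_const.mul ((hF.continuousOn_iteratedDeriv hUo (k + 1)).comp_ofReal_mul hU hz)
  have htaylor := taylor_integral_of_hasDerivAt u k (fun m _ => hu m) hc
  rw [Finset.sum_eq_zero fun m hm => by simp [u, h0 m (Finset.mem_range.1 hm)], zero_add] at htaylor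
  rw [Vop, Nat.add_sub_cancel]
  convert htaylor using 1
  · simp [u]
  · rw [Complex.real_smul, ← intervalIntegral.integral_const_mul,
      ← intervalIntegral.integral_const_mul]
    refine intervalIntegral.integral_congr fun t _ => ?_
    simp only [u, Complex.real_smul, show z - t * z = (1 - t) * z by ring, mul_pow]
    push_cast
    ring

open ProbabilityTheory

noncomputable def angleMeasure : Measure ℝ := volume[|Ioc 0 (2 * Real.pi)]

instance : IsProbabilityMeasure angleMeasure :=
  cond_isProbabilityMeasure_of_finite (by simp [Real.pi_pos]) (by simp [ENNReal.mul_eq_top])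

lemma circleMap_zero_mem_ball_one {r : ℝ} (hr : r ∈ Ioo (0:ℝ) 1) (θ : ℝ) :
    circleMap 0 r θ ∈ ball (0:ℂ) 1 := by
  simpa [abs_of_pos hr.1] using hr.2

lemma ofReal_norm_rpow {E : Type*} [NormedAddCommGroup E] (x : E) {p : ℝ} (hp : 0 ≤ p) :
    ENNReal.ofReal (‖x‖ ^ p) = ‖x‖ₑ ^ p := by
  rw [← ENNReal.ofReal_rpow_of_nonneg (norm_nonneg _) hp, ofReal_norm]

lemma hardyNorm_eq_iSup_eLpNorm {p : ℝ} (hp : 0 < p) (f : ℂ → ℂ) :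
    hardyNorm p f =
      ⨆ r : Ioo (0:ℝ) 1,
        eLpNorm (fun θ => f (circleMap 0 r θ)) (ENNReal.ofReal p) angleMeasure := by
  unfold hardyNorm
  congr 1 with r
  rw [eLpNorm_eq_lintegral_rpow_enorm_toReal (by simpa using hp) ENNReal.ofReal_ne_top,
    ENNReal.toReal_ofReal hp.le, angleMeasure, ProbabilityTheory.cond, lintegral_smul_measure,
    Real.volume_Ioc, sub_zero, smul_eq_mul, ← ENNReal.div_eq_inv_mul]
  simp_rw [circleMap_zero, ofReal_norm_rpow _ hp.le]

lemma hardyNorm_le_iff {p : ℝ} (hp : 0 < p) {f : ℂ → ℂ} {H : ENNReal} :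
    hardyNorm p f ≤ H ↔
      ∀ r ∈ Ioo (0:ℝ) 1, ∫⁻ θ, ‖f (circleMap 0 r θ)‖ₑ ^ p ∂angleMeasure ≤ H ^ p := by
  simp only [hardyNorm_eq_iSup_eLpNorm hp, iSup_le_iff, Subtype.forall,
    eLpNorm_eq_lintegral_rpow_enorm_toReal (ENNReal.ofReal_pos.2 hp).ne' ENNReal.ofReal_ne_top,
    ENNReal.toReal_ofReal hp.le, one_div, ENNReal.rpow_inv_le_iff hp]

lemma hardyNorm_congr {p : ℝ} {a b : ℂ → ℂ} (h : EqOn a b (ball (0:ℂ) 1)) :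
    hardyNorm p a = hardyNorm p b := by
  unfold hardyNorm
  congr 1 with r
  congr 3 with θ
  rw [← circleMap_zero, h (circleMap_zero_mem_ball_one r.2 θ)]

lemma hardyNorm_mono {p : ℝ} (hp : 0 < p) {a b : ℂ → ℂ}
    (h : ∀ z ∈ ball (0:ℂ) 1, ‖a z‖ ≤ ‖b z‖) :
    hardyNorm p a ≤ hardyNorm p b := by
  simp only [hardyNorm_eq_iSup_eLpNorm hp]
  exact iSup_mono fun r => eLpNorm_mono fun θ => h _ (circleMap_zero_mem_ball_one r.2 θ)

lemma hardyNorm_add_le {p : ℝ} (hp : 1 ≤ p) {a b : ℂ → ℂ}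
    (ha : ContinuousOn a (ball (0:ℂ) 1)) (hb : ContinuousOn b (ball (0:ℂ) 1)) :
    hardyNorm p (a + b) ≤ hardyNorm p a + hardyNorm p b := by
  have hp0 : 0 < p := by linarith
  have hcirc {c : ℂ → ℂ} (hc : ContinuousOn c (ball (0:ℂ) 1)) (r : Ioo (0:ℝ) 1) :
      AEStronglyMeasurable (fun θ => c (circleMap 0 r θ)) angleMeasure :=
    (hc.comp_continuous (continuous_circleMap 0 r)
      (circleMap_zero_mem_ball_one r.2)).aestronglyMeasurable
  simp only [hardyNorm_eq_iSup_eLpNorm hp0]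
  refine iSup_le fun r => (eLpNorm_add_le (hcirc ha r) (hcirc hb r) ?_).trans ?_
  · simpa using hp
  · exact add_le_add (le_iSup (fun r : Ioo (0:ℝ) 1 => eLpNorm _ _ _) r)
      (le_iSup (fun r : Ioo (0:ℝ) 1 => eLpNorm _ _ _) r)

lemma hardyNorm_const_mul {p : ℝ} (hp : 0 < p) (c : ℂ) (a : ℂ → ℂ) :
    hardyNorm p (fun z => c * a z) = ‖c‖ₑ * hardyNorm p a := by
  simp only [hardyNorm_eq_iSup_eLpNorm hp, ENNReal.mul_iSup]
  congr 1 with r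
  exact eLpNorm_const_smul c (fun θ => a (circleMap 0 r θ)) _ _

lemma rpow_lintegral_le_lintegral_rpow {α : Type*} [MeasurableSpace α] {μ : Measure α}
    [IsProbabilityMeasure μ] {p : ℝ} (hp : 1 ≤ p) {h : α → ENNReal} (hh : AEMeasurable h μ) :
    (∫⁻ x, h x ∂μ) ^ p ≤ ∫⁻ x, h x ^ p ∂μ := by
  have hp0 : 0 < p := by linarith
  have key := eLpNorm_le_eLpNorm_of_exponent_le (p := 1) (q := ENNReal.ofReal p)
    (by simpa using hp) hh.aestronglyMeasurable
  rwa [eLpNorm_one_eq_lintegral_enorm, eLpNorm_eq_lintegral_rpow_enorm_toReal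
    (ENNReal.ofReal_pos.2 hp0).ne' ENNReal.ofReal_ne_top, ENNReal.toReal_ofReal hp0.le, one_div,
    ENNReal.le_rpow_inv_iff hp0] at key

lemma enorm_Volterra_le (g : ℂ → ℂ) {w : ℂ} (hw : ‖w‖ ≤ 1) :
    ‖Volterra g w‖ₑ ≤ ∫⁻ t in Ioc (0:ℝ) 1, ‖g (t * w)‖ₑ := by
  rw [Volterra, intervalIntegral.integral_of_le zero_le_one]
  refine (enorm_integral_le_lintegral_enorm _).trans (lintegral_mono fun t => ?_)
  rw [enorm_mul]
  exact mul_le_of_le_one_left' (by simpa [← ofReal_norm] using hw)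

lemma hardyNorm_Volterra_le {p : ℝ} (hp : 1 ≤ p) {g : ℂ → ℂ}
    (hg : ContinuousOn g (ball (0:ℂ) 1)) :
    hardyNorm p (Volterra g) ≤ hardyNorm p g := by
  have hp0 : 0 < p := by linarith
  have : IsProbabilityMeasure (volume.restrict (Ioc (0:ℝ) 1)) := ⟨by simp⟩
  have hball := starConvex_ball_zero 1 one_pos
  rw [hardyNorm_le_iff hp0]
  intro r hr
  have hcirc (θ : ℝ) := circleMap_zero_mem_ball_one hr θ
  have hmeas : AEMeasurable (fun q : ℝ × ℝ => ‖g (q.2 * circleMap 0 r q.1)‖ₑ ^ p)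
      (angleMeasure.prod (volume.restrict (Ioc (0:ℝ) 1))) := by
    rw [← Measure.restrict_univ (μ := angleMeasure), Measure.prod_restrict]
    refine (ContinuousOn.aemeasurable ?_
      (MeasurableSet.univ.prod measurableSet_Ioc)).enorm.pow_const p
    exact hg.comp (by fun_prop) fun q hq =>
      hball.ofReal_mul_mem (hcirc q.1) (Ioc_subset_Icc_self hq.2)
  calc ∫⁻ θ, ‖Volterra g (circleMap 0 r θ)‖ₑ ^ p ∂angleMeasure
      ≤ ∫⁻ θ, (∫⁻ t in Ioc (0:ℝ) 1, ‖g (t * circleMap 0 r θ)‖ₑ ^ p) ∂angleMeasure := by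
        refine lintegral_mono fun θ => (ENNReal.rpow_le_rpow (enorm_Volterra_le g
          (mem_ball_zero_iff.1 (hcirc θ)).le) hp0.le).trans (rpow_lintegral_le_lintegral_rpow hp ?_)
        exact (((hg.comp_ofReal_mul hball (hcirc θ)).mono Ioc_subset_Icc_self).aemeasurable
          measurableSet_Ioc).enorm
    _ = ∫⁻ t in Ioc (0:ℝ) 1, ∫⁻ θ, ‖g (circleMap 0 (t * r) θ)‖ₑ ^ p ∂angleMeasure := by
        rw [lintegral_lintegral_swap hmeas]
        simp_rw [circleMap_zero, Complex.ofReal_mul, mul_assoc]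
    _ ≤ ∫⁻ t in Ioc (0:ℝ) 1, hardyNorm p g ^ p := by
        refine setLIntegral_mono' measurableSet_Ioc fun t ht => (hardyNorm_le_iff hp0).1 le_rfl _ ?_
        exact ⟨mul_pos ht.1 hr.1, (mul_le_of_le_one_left hr.1.le ht.2).trans_lt hr.2⟩
    _ = hardyNorm p g ^ p := by simp

lemma hardyNorm_iteratedDeriv_le_succ {p : ℝ} (hp : 1 ≤ p) {f : ℂ → ℂ}
    (hf : DifferentiableOn ℂ f (ball 0 1)) {k : ℕ} (hk : iteratedDeriv k f 0 = 0) :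
    hardyNorm p (iteratedDeriv k f) ≤ hardyNorm p (iteratedDeriv (k + 1) f) := by
  rw [hardyNorm_congr (eqOn_Volterra_iteratedDeriv_succ isOpen_ball
    (starConvex_ball_zero 1 one_pos) hf hk)]
  exact hardyNorm_Volterra_le hp (hf.continuousOn_iteratedDeriv isOpen_ball (k + 1))

lemma hardyNorm_iteratedDeriv_id_mul_le {p : ℝ} (hp : 1 ≤ p) {f : ℂ → ℂ}
    (hf : DifferentiableOn ℂ f (ball 0 1)) {k : ℕ} (hk : iteratedDeriv k f 0 = 0) :
    hardyNorm p (iteratedDeriv (k + 1) (fun w => w * f w)) ≤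
      (k + 2) * hardyNorm p (iteratedDeriv (k + 1) f) := by
  have hcont := hf.continuousOn_iteratedDeriv isOpen_ball
  calc hardyNorm p (iteratedDeriv (k + 1) (fun w => w * f w))
      = hardyNorm p ((fun w => w * iteratedDeriv (k + 1) f w) +
          fun w => ((k + 1 : ℕ) : ℂ) * iteratedDeriv k f w) :=
        hardyNorm_congr fun w hw => iteratedDeriv_succ_id_mul hf isOpen_ball k hw
    _ ≤ hardyNorm p (fun w => w * iteratedDeriv (k + 1) f w) +
          hardyNorm p (fun w => ((k + 1 : ℕ) : ℂ) * iteratedDeriv k f w) :=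
        hardyNorm_add_le hp (continuousOn_id.mul (hcont (k + 1))) (continuousOn_const.mul (hcont k))
    _ ≤ hardyNorm p (iteratedDeriv (k + 1) f) +
          (k + 1) * hardyNorm p (iteratedDeriv (k + 1) f) := by
        gcongr
        · refine hardyNorm_mono (by linarith) fun w hw => ?_
          rw [norm_mul]
          exact mul_le_of_le_one_left (norm_nonneg _) (mem_ball_zero_iff.1 hw).le
        · rw [hardyNorm_const_mul (by linarith), ← ofReal_norm, Complex.norm_natCast,
            ENNReal.ofReal_natCast]
          push_cast
          gcongr
          exact hardyNorm_iteratedDeriv_le_succ hp hf hk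
    _ = (k + 2) * hardyNorm p (iteratedDeriv (k + 1) f) := by ring

lemma MemS0.id_mul {p : ℝ} (hp : 1 ≤ p) {k : ℕ} {f : ℂ → ℂ} (hf : MemS0 (k + 1) p f) :
    MemS0 (k + 1) p (fun w => w * f w) := by
  obtain ⟨⟨hdiff, hnorm⟩, hvanish⟩ := hf
  refine ⟨⟨differentiableOn_id.mul hdiff, ?_⟩, fun m hm => ?_⟩
  · exact (hardyNorm_iteratedDeriv_id_mul_le hp hdiff (hvanish k k.lt_succ_self)).trans_lt
      (ENNReal.mul_lt_top (by simp) hnorm)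
  · rcases m with _ | j
    · simp
    · rw [iteratedDeriv_succ_id_mul hdiff isOpen_ball j (mem_ball_self one_pos),
        hvanish j (by omega)]
      simp

theorem shift_similar_to_T (n : ℕ) (p : ℝ) (hn : 1 ≤ n) (hp : 1 ≤ p)
    (f : ℂ → ℂ) (hf : MemS0 n p f) :
    MemS0 n p (fun w => w * f w) ∧
    ∀ z ∈ Metric.ball (0:ℂ) 1,
      z * f z =
        Vop n (fun w => w * iteratedDeriv n f w +
          (n:ℂ) * Volterra (iteratedDeriv n f) w) z := by
  obtain ⟨k, rfl⟩ := Nat.exists_eq_add_of_le' hn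
  have hball := starConvex_ball_zero 1 one_pos
  have hwf := hf.id_mul hp
  refine ⟨hwf, fun z hz => ?_⟩
  refine (eq_Vop_iteratedDeriv isOpen_ball hball hwf.1.1 k hwf.2 hz).trans
    (Vop_congr hball (fun w hw => ?_) hz)
  rw [iteratedDeriv_succ_id_mul hf.1.1 isOpen_ball k hw,
    ← eqOn_Volterra_iteratedDeriv_succ isOpen_ball hball hf.1.1 (hf.2 k k.lt_succ_self) hw]
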